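/- For positive integers a > b and reals x, q > 0 satisfying q(1+x) ≤ b/a, the double binomial sum satisfies ∑_{i=b}^{a} ∑_{j=0}^{i} C(a,i) C(i,j) x^j q^i ≤ (e·a·q·(1+x)/b)^b. -/

import Mathlib

/-!
Summing over `j` first, the binomial theorem collapses the double sum to the binomial tail
`∑_{i ≥ b} C(a,i) t^i` with `t = q(1 + x)`. Tilting by `u = b/a ≥ t` gives
`t^i ≤ (t/u)^b u^i` for `i ≥ b`, so the tail is at most `(t/u)^b (1 + u)^a ≤ (t a / b)^b e^b`.
-/

open Finset Real

theorem one_add_pow_eq_sum_choose_mul_pow {R : Type*} [CommSemiring R] (x : R) (n : ℕ) :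
    (1 + x) ^ n = ∑ m ∈ range (n + 1), (n.choose m : R) * x ^ m := by
  rw [add_comm, add_pow]
  exact sum_congr rfl fun m _ => by rw [one_pow, mul_one, mul_comm]

theorem sum_Icc_choose_mul_pow_le {a b : ℕ} {t u : ℝ} (ht : 0 ≤ t) (hu : 0 < u) (htu : t ≤ u) :
    ∑ i ∈ Icc b a, (a.choose i : ℝ) * t ^ i ≤ (t / u) ^ b * (1 + u) ^ a := by
  have hratio : t / u ≤ 1 := (div_le_one hu).2 htu
  calc ∑ i ∈ Icc b a, (a.choose i : ℝ) * t ^ i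
      ≤ ∑ i ∈ Icc b a, (t / u) ^ b * ((a.choose i : ℝ) * u ^ i) := by
        refine sum_le_sum fun i hi => ?_
        have htilt : t ^ i ≤ (t / u) ^ b * u ^ i := calc
          t ^ i = (t / u) ^ i * u ^ i := by rw [← mul_pow, div_mul_cancel₀ t hu.ne']
          _ ≤ (t / u) ^ b * u ^ i := by
            have := pow_le_pow_of_le_one (by positivity) hratio (mem_Icc.1 hi).1
            gcongr
        exact (mul_le_mul_of_nonneg_left htilt (by positivity)).trans_eq (by ring)
    _ ≤ (t / u) ^ b * ∑ i ∈ range (a + 1), (a.choose i : ℝ) * u ^ i := by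
        rw [← mul_sum]
        gcongr
        intro i hi
        simpa [Nat.lt_succ_iff] using (mem_Icc.1 hi).2
    _ = (t / u) ^ b * (1 + u) ^ a := by rw [one_add_pow_eq_sum_choose_mul_pow]

theorem sum_Icc_choose_mul_pow_le_exp {a b : ℕ} {t : ℝ} (ht : 0 < t) (h : t ≤ b / a) :
    ∑ i ∈ Icc b a, (a.choose i : ℝ) * t ^ i ≤ (exp 1 * a * t / b) ^ b := by
  have hu : 0 < (b : ℝ) / a := ht.trans_le h
  have ha : (a : ℝ) ≠ 0 := fun ha => by simp [ha] at hu
  have hb : (b : ℝ) ≠ 0 := fun hb => by simp [hb] at hu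
  have hexp : (1 + (b : ℝ) / a) ^ a ≤ exp 1 ^ b := by
    simpa [exp_one_pow, sub_eq_add_neg, neg_div] using
      one_sub_div_pow_le_exp_neg (n := a) (t := -b) (by linarith [a.cast_nonneg (α := ℝ)])
  calc ∑ i ∈ Icc b a, (a.choose i : ℝ) * t ^ i
      ≤ (t / (b / a)) ^ b * (1 + (b : ℝ) / a) ^ a :=
        sum_Icc_choose_mul_pow_le ht.le hu h
    _ ≤ (t / (b / a)) ^ b * exp 1 ^ b := by gcongr
    _ = (exp 1 * a * t / b) ^ b := by
        rw [← mul_pow]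
        congr 1
        field_simp

theorem double_binomial_bound_general (a b : ℕ) (x q : ℝ)
    (hx : 0 < x) (hq : 0 < q) (h : q * (1 + x) ≤ (b : ℝ) / a) :
    ∑ i ∈ Finset.Icc b a, ∑ j ∈ Finset.range (i + 1),
        (a.choose i : ℝ) * (i.choose j : ℝ) * x ^ j * q ^ i ≤
      (Real.exp 1 * a * q * (1 + x) / b) ^ b := by
  have hinner : ∀ i, ∑ j ∈ range (i + 1), (a.choose i : ℝ) * (i.choose j : ℝ) * x ^ j * q ^ i
      = (a.choose i : ℝ) * (q * (1 + x)) ^ i := fun i => by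
    rw [mul_pow, one_add_pow_eq_sum_choose_mul_pow, mul_sum, mul_sum]
    exact sum_congr rfl fun j _ => by ring
  rw [sum_congr rfl fun i _ => hinner i]
  refine (sum_Icc_choose_mul_pow_le_exp (by positivity) h).trans_eq ?_
  ring

theorem double_binomial_bound (a b : ℕ) (hb : 0 < b) (hab : b < a) (x q : ℝ)
    (hx : 0 < x) (hq : 0 < q) (h : q * (1 + x) ≤ (b : ℝ) / a) :
    ∑ i ∈ Finset.Icc b a, ∑ j ∈ Finset.range (i + 1),
        (a.choose i : ℝ) * (i.choose j : ℝ) * x ^ j * q ^ i ≤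
      (Real.exp 1 * a * q * (1 + x) / b) ^ b :=
  double_binomial_bound_general a b x q hx hq h
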